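/- arXiv:2601.21731 — 2 statements merged into one kernel-verified Lean document; each statement's English description precedes it below -/
import Mathlib

section
/- Let N ≥ 1, let K be an N×N real positive semidefinite matrix, and let c > 0. Let γ_K denote the centered multivariate Gaussian measure on ℝ^N with covariance matrix K, and let T : ℝ^N → ℝ^N be the empirical-variance normalization map. Then the pushforward of γ_K under T equals the pushforward of γ_{cK} under T. In particular, no statistic of the normalized observation vector can distinguish the covariance K from cK, so the covariance (and hence the spectral weights of a stationary kernel) is identifiable from a single normalized realization only up to a common multiplicative constant. -/
open MeasureTheory ProbabilityTheory Matrix Real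

/-- The standard Gaussian measure on `ℝ^N` (product of `N` standard normals). -/
noncomputable def stdGaussianPi (N : ℕ) : Measure (Fin N → ℝ) :=
  Measure.pi fun _ => gaussianReal 0 1

/-- The positive semidefinite square root of a positive semidefinite matrix
(restored: removed from Mathlib; this is its former definition). -/
noncomputable def Matrix.PosSemidef.sqrt {n : Type*} [Fintype n] [DecidableEq n]
    {A : Matrix n n ℝ} (hA : A.PosSemidef) : Matrix n n ℝ :=
  hA.1.eigenvectorUnitary.1 * diagonal ((↑) ∘ (√·) ∘ hA.1.eigenvalues) *
    (star hA.1.eigenvectorUnitary : Matrix n n ℝ)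

/-- The centered multivariate Gaussian measure on `ℝ^N` with positive semidefinite
covariance matrix `K`, realized as the pushforward of the standard Gaussian under
multiplication by the positive semidefinite square root of `K`.  Its covariance
bilinear form is `(u, v) ↦ uᵀ K v`. -/
noncomputable def centeredGaussian {N : ℕ} (K : Matrix (Fin N) (Fin N) ℝ)
    (hK : K.PosSemidef) : Measure (Fin N → ℝ) :=
  (stdGaussianPi N).map fun x => hK.sqrt.mulVec x

/-- The empirical-variance normalization map `T(v) = (v - v̄·1) / ‖v - v̄·1‖₂`,
with the convention `T v = 0` when `v - v̄·1 = 0` (the inverse of `0` is `0`). -/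
noncomputable def empNormalize (N : ℕ) (v : Fin N → ℝ) : Fin N → ℝ :=
  (Real.sqrt (∑ i, (v i - (∑ j, v j) / N) ^ 2))⁻¹ • fun i => v i - (∑ j, v j) / N


/-! Scaling a centered Gaussian vector by `√c` multiplies its covariance by `c`, and the
normalization map forgets positive scalar factors, so `γ_K` and `γ_{cK}` have the same image. -/

namespace Matrix.PosSemidef

variable {n : Type*} [Fintype n] [DecidableEq n]

theorem sqrt_eq_cfc {A : Matrix n n ℝ} (hA : A.PosSemidef) : hA.sqrt = cfc Real.sqrt A := by
  rw [hA.1.cfc_eq]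
  simp [Matrix.PosSemidef.sqrt, IsHermitian.cfc, Unitary.conjStarAlgAut_apply, Function.comp_def]

theorem sqrt_smul {A : Matrix n n ℝ} (hA : A.PosSemidef) {c : ℝ} (hc : 0 ≤ c)
    (hcA : (c • A).PosSemidef) : hcA.sqrt = √c • hA.sqrt := by
  have : IsSelfAdjoint A := hA.1
  rw [sqrt_eq_cfc, sqrt_eq_cfc, ← cfc_comp_smul c Real.sqrt A, ← cfc_const_mul √c Real.sqrt A]
  exact cfc_congr fun x _ => Real.sqrt_mul hc x

end Matrix.PosSemidef

theorem Matrix.measurable_mulVec {m n : Type*} [Fintype m] [Fintype n] (M : Matrix m n ℝ) :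
    Measurable M.mulVec :=
  (Matrix.mulVecLin M).continuous_of_finiteDimensional.measurable

theorem centeredGaussian_smul {N : ℕ} {K : Matrix (Fin N) (Fin N) ℝ} (hK : K.PosSemidef)
    {c : ℝ} (hc : 0 ≤ c) (hcK : (c • K).PosSemidef) :
    centeredGaussian (c • K) hcK = (centeredGaussian K hK).map (√c • ·) := by
  rw [centeredGaussian, centeredGaussian, Measure.map_map (measurable_const_smul _)
    hK.sqrt.measurable_mulVec, hK.sqrt_smul hc hcK]
  congr 1
  funext x
  exact Matrix.smul_mulVec _ _ _

theorem measurable_empNormalize (N : ℕ) : Measurable (empNormalize N) := by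
  unfold empNormalize
  fun_prop

theorem empNormalize_smul_of_pos (N : ℕ) {a : ℝ} (ha : 0 < a) (v : Fin N → ℝ) :
    empNormalize N (a • v) = empNormalize N v := by
  set d : Fin N → ℝ := fun i => v i - (∑ j, v j) / N
  have hcenter : ∀ i, a * v i - (∑ j, a * v j) / N = a * d i := fun i => by
    rw [← Finset.mul_sum, mul_sub, mul_div_assoc]
  have hnorm : √(∑ i, (a * d i) ^ 2) = a * √(∑ i, d i ^ 2) := by
    simp_rw [mul_pow, ← Finset.mul_sum]
    rw [Real.sqrt_mul (sq_nonneg a), Real.sqrt_sq ha.le]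
  funext i
  simp only [empNormalize, Pi.smul_apply, smul_eq_mul, hcenter, hnorm, mul_inv]
  field_simp
  rfl

theorem pushforward_empNormalize_eq_of_smul_general
    {N : ℕ} (K : Matrix (Fin N) (Fin N) ℝ) (hK : K.PosSemidef)
    (c : ℝ) (hc : 0 < c) (hcK : (c • K).PosSemidef) :
    (centeredGaussian K hK).map (empNormalize N) =
      (centeredGaussian (c • K) hcK).map (empNormalize N) := by
  have hscale : empNormalize N ∘ (√c • ·) = empNormalize N :=
    funext (empNormalize_smul_of_pos N (Real.sqrt_pos.mpr hc))
  rw [centeredGaussian_smul hK hc.le hcK,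
    Measure.map_map (measurable_empNormalize N) (measurable_const_smul _), hscale]

/-- **Single-realization non-identifiability of the covariance scale.**
For any `N ≥ 1`, any positive semidefinite covariance `K` and any `c > 0`, the
pushforward of the centered Gaussian `γ_K` under the empirical-variance
normalization map equals that of `γ_{cK}`: no statistic of the normalized
observation can distinguish `K` from `c • K`. -/
theorem pushforward_empNormalize_eq_of_smul
    {N : ℕ} (hN : 1 ≤ N) (K : Matrix (Fin N) (Fin N) ℝ) (hK : K.PosSemidef)
    (c : ℝ) (hc : 0 < c) (hcK : (c • K).PosSemidef) :
    (centeredGaussian K hK).map (empNormalize N) =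
      (centeredGaussian (c • K) hcK).map (empNormalize N) :=
  pushforward_empNormalize_eq_of_smul_general K hK c hc hcK
end

section
/- Let Q ≥ 1 and let (μ_1, σ_1), …, (μ_Q, σ_Q) be pairwise distinct pairs with σ_q > 0 for all q. If a_1, …, a_Q ∈ ℝ satisfy ∑_{q=1}^Q a_q · (1/(√(2π)·σ_q)) · exp(−(ω − μ_q)²/(2σ_q²)) = 0 for every ω ∈ ℝ, then a_q = 0 for all q. In particular, the weights of a Gaussian spectral mixture density with fixed distinct components are uniquely determined by the density function. -/
open Real Filter Asymptotics ProbabilityTheory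
open scoped NNReal

/-! Order the components lexicographically by `(σ, μ)`. As `ω → ∞` the ratio of two Gaussian
densities is the exponential of a quadratic in `ω` whose leading coefficient is decided by the
variances and, for equal variances, whose linear coefficient is decided by the means; so each
component is `o` of every lexicographically larger one. In a vanishing combination the largest
component with a nonzero weight would then be `o` of itself. -/

theorem tendsto_quadratic_atTop {a b : ℝ} (h : 0 < a ∨ a = 0 ∧ 0 < b) (c : ℝ) :
    Tendsto (fun x => a * x ^ 2 + b * x + c) atTop atTop := by
  rcases h with ha | ⟨rfl, hb⟩
  · have hlin := tendsto_atTop_add_const_right _ b (tendsto_id.const_mul_atTop ha)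
    exact (tendsto_atTop_add_const_right _ c (tendsto_id.atTop_mul_atTop₀ hlin)).congr
      fun x => by simp only [id]; ring
  · exact (tendsto_atTop_add_const_right _ c (tendsto_id.const_mul_atTop hb)).congr
      fun x => by simp only [id]; ring

theorem linearIndependent_of_isLittleO {𝕜 E α ι β : Type*} [NormedField 𝕜]
    [NormedAddCommGroup E] [NormedSpace 𝕜 E] [Fintype ι] [LinearOrder β]
    {l : Filter α} {f : ι → α → E} (k : ι → β) (hk : Function.Injective k)
    (hf : ∀ i, ∃ᶠ x in l, f i x ≠ 0) (hdom : ∀ i j, k i < k j → f i =o[l] f j) :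
    LinearIndependent 𝕜 f := by
  classical
  refine Fintype.linearIndependent_iff.2 fun a ha => ?_
  by_contra! hne
  obtain ⟨i₀, hi₀, hmax⟩ := (Finset.univ.filter (a · ≠ 0)).exists_max_image k
    (by obtain ⟨i, hi⟩ := hne; exact ⟨i, by simpa using hi⟩)
  have hsmall : ∀ i ∈ Finset.univ.erase i₀, (a i • f i) =o[l] f i₀ := by
    intro i hi
    by_cases hai : a i = 0
    · simp only [hai, zero_smul]
      exact isLittleO_zero _ _
    · have hlt : k i < k i₀ := (hmax i (by simpa using hai)).lt_of_ne
        (hk.ne (Finset.ne_of_mem_erase hi))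
      exact (hdom i i₀ hlt).const_smul_left _
  have hself : (a i₀ • f i₀) =o[l] f i₀ := by
    rw [← Finset.add_sum_erase _ _ (Finset.mem_univ i₀)] at ha
    rw [eq_neg_of_add_eq_zero_left ha]
    exact (IsLittleO.sum hsmall).neg_left
  exact isLittleO_irrefl (hf i₀) ((isLittleO_const_smul_left (by simpa using hi₀)).1 hself)

theorem gaussianPDFReal_isLittleO_atTop {μ μ' : ℝ} {v v' : ℝ≥0} (hv' : v' ≠ 0)
    (h : toLex (v, μ) < toLex (v', μ')) :
    gaussianPDFReal μ v =o[atTop] gaussianPDFReal μ' v' := by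
  rcases eq_or_ne v 0 with rfl | hv
  · rw [gaussianPDFReal_zero_var]
    exact isLittleO_zero _ _
  have hv₀ : (0 : ℝ) < v := NNReal.coe_pos.2 (pos_iff_ne_zero.2 hv)
  have hv₀' : (0 : ℝ) < v' := NNReal.coe_pos.2 (pos_iff_ne_zero.2 hv')
  have hcoeff : 0 < 1 / (2 * (v : ℝ)) - 1 / (2 * v') ∨
      1 / (2 * (v : ℝ)) - 1 / (2 * v') = 0 ∧ 0 < μ' / v' - μ / v := by
    rcases Prod.Lex.toLex_lt_toLex.1 h with hlt | ⟨hveq, hlt⟩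
    · left
      rw [sub_pos]
      gcongr
    · right
      simp only at hveq hlt
      subst hveq
      exact ⟨sub_self _, sub_pos.2 (div_lt_div_of_pos_right hlt hv₀)⟩
  have hexp : (fun x => exp (-(x - μ) ^ 2 / (2 * v))) =o[atTop]
      fun x => exp (-(x - μ') ^ 2 / (2 * v')) := by
    refine isLittleO_exp_comp_exp_comp.2 ((tendsto_quadratic_atTop hcoeff
      (μ ^ 2 / (2 * v) - μ' ^ 2 / (2 * v'))).congr fun x => ?_)
    field_simp
    ring
  simp only [gaussianPDFReal_def]
  refine (isLittleO_const_mul_right_iff ?_).2 (hexp.const_mul_left _)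
  exact inv_ne_zero (sqrt_pos.2 (by positivity)).ne'

theorem gaussianPDFReal_toNNReal_sq {σ : ℝ} (hσ : 0 ≤ σ) (μ x : ℝ) :
    gaussianPDFReal μ (σ ^ 2).toNNReal x =
      1 / (√(2 * π) * σ) * exp (-(x - μ) ^ 2 / (2 * σ ^ 2)) := by
  rw [gaussianPDFReal_def, Real.coe_toNNReal _ (sq_nonneg σ), sqrt_mul (by positivity), sqrt_sq hσ,
    one_div]

theorem gaussian_mixture_weights_unique_general
    (Q : ℕ) (μ σ : Fin Q → ℝ) (hσ : ∀ q, 0 < σ q)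
    (hdist : Function.Injective fun q => (μ q, σ q))
    (a : Fin Q → ℝ)
    (h : ∀ ω : ℝ, ∑ q, a q * (1 / (Real.sqrt (2 * π) * σ q)) *
        Real.exp (-(ω - μ q) ^ 2 / (2 * σ q ^ 2)) = 0) :
    ∀ q, a q = 0 := by
  set v : Fin Q → ℝ≥0 := fun q => (σ q ^ 2).toNNReal
  have hv : ∀ q, v q ≠ 0 := fun q => by simpa [v] using (hσ q).ne'
  have hkey : Function.Injective fun q => toLex (v q, μ q) := by
    intro q q' hqq'
    obtain ⟨hvq, hμq⟩ := Prod.ext_iff.1 (toLex.injective hqq')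
    have hσq : σ q = σ q' := (sq_eq_sq₀ (hσ q).le (hσ q').le).1
      ((Real.toNNReal_eq_toNNReal_iff (sq_nonneg _) (sq_nonneg _)).1 hvq)
    exact hdist (Prod.ext hμq hσq)
  have hind : LinearIndependent ℝ fun q => gaussianPDFReal (μ q) (v q) :=
    linearIndependent_of_isLittleO _ hkey
      (fun q => Frequently.of_forall fun x => (gaussianPDFReal_pos _ _ x (hv q)).ne')
      fun _ j hlt => gaussianPDFReal_isLittleO_atTop (hv j) hlt
  refine Fintype.linearIndependent_iff.1 hind a (funext fun ω => ?_)
  simpa only [v, Finset.sum_apply, Pi.smul_apply, smul_eq_mul, gaussianPDFReal_toNNReal_sq (hσ _).le,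
    mul_assoc, Pi.zero_apply] using h ω

/-- **Linear independence of distinct Gaussian densities.**
If the pairs `(μ q, σ q)` are pairwise distinct with `σ q > 0`, and the linear
combination `∑ q, a q · (1/(√(2π)·σ q)) · exp(−(ω−μ q)²/(2σ q²))` vanishes for
every `ω ∈ ℝ`, then all coefficients `a q` vanish.  In particular, the weights
of a Gaussian spectral mixture density with fixed distinct components are
uniquely determined by the density function. -/
theorem gaussian_mixture_weights_unique
    (Q : ℕ) (hQ : 1 ≤ Q) (μ σ : Fin Q → ℝ) (hσ : ∀ q, 0 < σ q)
    (hdist : Function.Injective fun q => (μ q, σ q))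
    (a : Fin Q → ℝ)
    (h : ∀ ω : ℝ, ∑ q, a q * (1 / (Real.sqrt (2 * π) * σ q)) *
        Real.exp (-(ω - μ q) ^ 2 / (2 * σ q ^ 2)) = 0) :
    ∀ q, a q = 0 :=
  gaussian_mixture_weights_unique_general Q μ σ hσ hdist a h
end
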